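/- arXiv:2209.11225 — 2 statements merged into one kernel-verified Lean document; each statement's English description precedes it below -/
import Mathlib

section
/- The topological closure of the conic hull (set of all finite nonnegative linear combinations) of the curve {(exp(x), 1, x) : x ∈ ℝ} ⊆ ℝ³ equals the exponential cone K_exp. -/
open Real

/-- The exponential cone
`K_exp = {(x₁,x₂,x₃) : x₂ > 0, x₁ ≥ x₂·exp(x₃/x₂)} ∪ {(x₁,0,x₃) : x₁ ≥ 0, x₃ ≤ 0}`. -/
def Kexp : Set (Fin 3 → ℝ) :=
  {x | 0 < x 1 ∧ x 1 * Real.exp (x 2 / x 1) ≤ x 0} ∪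
  {x | x 1 = 0 ∧ 0 ≤ x 0 ∧ x 2 ≤ 0}

/-- The conic hull of a set `S ⊆ ℝ³`: all finite nonnegative linear combinations of
elements of `S`. -/
def conicHull (S : Set (Fin 3 → ℝ)) : Set (Fin 3 → ℝ) :=
  {p | ∃ (n : ℕ) (c : Fin n → ℝ) (v : Fin n → (Fin 3 → ℝ)),
    (∀ i, 0 ≤ c i) ∧ (∀ i, v i ∈ S) ∧ p = ∑ i, c i • v i}

/-!
Each `expDual r = (exp (-r), r - 1, -1)` is nonnegative on the curve `(exp a, 1, a)` because
`exp (a - r) ≥ 1 + (a - r)`, hence on the closed conic hull; minimising over `r` (at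
`r = log (x 0 / x 1)`, or letting `r → ±∞` when `x 1 = 0`) shows that the points where all of them
are nonnegative form exactly `K_exp`. Conversely, a point `x` of `K_exp` with `x 1 > 0` is
`x 1 • (exp (x 2 / x 1), 1, x 2 / x 1)` plus a nonnegative multiple of `(1, 0, 0)`, and the
boundary part is spanned by `(1, 0, 0)` and `(0, 0, -1)`, the limits of `exp (-a) • (exp a, 1, a)`
and of `s⁻¹ • (exp (-s), 1, -s)` as `a, s → ∞`.
-/

open Filter Topology

theorem subset_conicHull {S : Set (Fin 3 → ℝ)} : S ⊆ conicHull S := fun v hv =>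
  ⟨1, fun _ => 1, fun _ => v, fun _ => zero_le_one, fun _ => hv, by simp⟩

namespace conicHull

variable {S : Set (Fin 3 → ℝ)}

theorem add_mem {p q : Fin 3 → ℝ} (hp : p ∈ conicHull S) (hq : q ∈ conicHull S) :
    p + q ∈ conicHull S := by
  obtain ⟨n, c, v, hc, hv, rfl⟩ := hp
  obtain ⟨m, d, w, hd, hw, rfl⟩ := hq
  refine ⟨n + m, Fin.append c d, Fin.append v w,
    Fin.addCases (by simpa using hc) (by simpa using hd),
    Fin.addCases (by simpa using hv) (by simpa using hw), ?_⟩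
  simp [Fin.sum_univ_add]

theorem smul_mem {c : ℝ} (hc : 0 ≤ c) {p : Fin 3 → ℝ} (hp : p ∈ conicHull S) :
    c • p ∈ conicHull S := by
  obtain ⟨n, d, v, hd, hv, rfl⟩ := hp
  exact ⟨n, fun i => c * d i, v, fun i => mul_nonneg hc (hd i), hv, by
    simp [Finset.smul_sum, smul_smul]⟩

theorem add_mem_closure {p q : Fin 3 → ℝ} (hp : p ∈ closure (conicHull S))
    (hq : q ∈ closure (conicHull S)) : p + q ∈ closure (conicHull S) :=
  map_mem_closure₂ continuous_add hp hq fun _ ha _ hb => add_mem ha hb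

theorem smul_mem_closure {c : ℝ} (hc : 0 ≤ c) {p : Fin 3 → ℝ} (hp : p ∈ closure (conicHull S)) :
    c • p ∈ closure (conicHull S) :=
  map_mem_closure (continuous_const_smul c) hp fun _ ha => smul_mem hc ha

theorem mem_closure_of_tendsto {α : Type*} {l : Filter α} [l.NeBot] {c : α → ℝ}
    {v : α → Fin 3 → ℝ} {p : Fin 3 → ℝ} (hc : ∀ᶠ a in l, 0 ≤ c a) (hv : ∀ a, v a ∈ S)
    (h : Tendsto (fun a => c a • v a) l (𝓝 p)) : p ∈ closure (conicHull S) :=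
  _root_.mem_closure_of_tendsto h (hc.mono fun a ha => smul_mem ha (subset_conicHull (hv a)))

theorem closure_subset_dotProduct_nonneg {w : Fin 3 → ℝ} (hS : ∀ v ∈ S, 0 ≤ w ⬝ᵥ v) :
    closure (conicHull S) ⊆ {x | 0 ≤ w ⬝ᵥ x} := by
  refine closure_minimal ?_
    (isClosed_le continuous_const (continuous_const.dotProduct continuous_id))
  rintro _ ⟨n, c, v, hc, hv, rfl⟩
  simp only [Set.mem_ofPred_eq, dotProduct_sum, dotProduct_smul, smul_eq_mul]
  exact Finset.sum_nonneg fun i _ => mul_nonneg (hc i) (hS _ (hv i))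

end conicHull

noncomputable def expCurve (a : ℝ) : Fin 3 → ℝ := ![exp a, 1, a]

/-- `expDual r` spans an extreme ray of the dual cone of `Kexp`. -/
noncomputable def expDual (r : ℝ) : Fin 3 → ℝ := ![exp (-r), r - 1, -1]

theorem expDual_dotProduct (r : ℝ) (x : Fin 3 → ℝ) :
    expDual r ⬝ᵥ x = x 0 * exp (-r) + x 1 * (r - 1) - x 2 := by
  simp only [dotProduct, expDual, Fin.sum_univ_three, Matrix.cons_val_zero, Matrix.cons_val_one,
    Matrix.cons_val, neg_mul, one_mul]
  ring

theorem expDual_dotProduct_expCurve_nonneg (r a : ℝ) : 0 ≤ expDual r ⬝ᵥ expCurve a := by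
  have h := add_one_le_exp (a - r)
  rw [sub_eq_add_neg, exp_add] at h
  rw [expDual_dotProduct]
  simp only [expCurve, Matrix.cons_val]
  linarith

section ExpDualNonneg

variable {x : Fin 3 → ℝ} (hx : ∀ r, 0 ≤ expDual r ⬝ᵥ x)
include hx

theorem apply_one_nonneg_of_expDual_nonneg : 0 ≤ x 1 := by
  by_contra! h1
  have : Tendsto (fun r => expDual r ⬝ᵥ x) atTop atBot := by
    simp only [expDual_dotProduct]
    exact tendsto_atBot_add_const_right _ _ <|
      (tendsto_exp_neg_atTop_nhds_zero.const_mul (x 0)).add_atBot <|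
      (tendsto_atTop_add_const_right _ _ tendsto_id).const_mul_atTop_of_neg h1
  obtain ⟨r, hr⟩ := (this.eventually (eventually_lt_atBot 0)).exists
  exact (hx r).not_gt hr

theorem apply_zero_nonneg_of_expDual_nonneg : 0 ≤ x 0 := by
  have hlim : Tendsto (fun r => x 2 * exp r) atBot (𝓝 0) := by
    simpa using tendsto_exp_atBot.const_mul (x 2)
  refine le_of_tendsto hlim ((eventually_le_atBot 1).mono fun r hr => ?_)
  have h := hx r
  rw [expDual_dotProduct] at h
  have : x 2 ≤ x 0 * exp (-r) := by nlinarith [apply_one_nonneg_of_expDual_nonneg hx]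
  calc x 2 * exp r ≤ x 0 * exp (-r) * exp r := by gcongr
    _ = x 0 := by rw [mul_assoc, ← exp_add, neg_add_cancel, exp_zero, mul_one]

theorem apply_two_nonpos_of_expDual_nonneg (h1 : x 1 = 0) : x 2 ≤ 0 := by
  have hlim : Tendsto (fun r => x 0 * exp (-r)) atTop (𝓝 0) := by
    simpa using tendsto_exp_neg_atTop_nhds_zero.const_mul (x 0)
  refine ge_of_tendsto' hlim fun r => ?_
  have h := hx r
  rw [expDual_dotProduct, h1] at h
  linarith

theorem mul_exp_le_of_expDual_nonneg (h1 : 0 < x 1) : x 1 * exp (x 2 / x 1) ≤ x 0 := by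
  have h0 : 0 < x 0 := by
    refine (apply_zero_nonneg_of_expDual_nonneg hx).lt_of_ne fun h0 => ?_
    have h := hx (x 2 / x 1)
    rw [expDual_dotProduct, ← h0, mul_sub, mul_div_cancel₀ _ h1.ne'] at h
    linarith
  -- `r ↦ expDual r ⬝ᵥ x` is minimal at `r = log (x 0 / x 1)`
  have h := hx (log (x 0 / x 1))
  rw [expDual_dotProduct, exp_neg, exp_log (div_pos h0 h1), inv_div,
    mul_div_cancel₀ _ h0.ne'] at h
  have : x 2 / x 1 ≤ log (x 0 / x 1) := by rw [div_le_iff₀ h1]; linarith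
  rw [le_log_iff_exp_le (div_pos h0 h1), le_div_iff₀ h1] at this
  linarith

theorem mem_Kexp_of_expDual_nonneg : x ∈ Kexp := by
  rcases (apply_one_nonneg_of_expDual_nonneg hx).eq_or_lt with h1 | h1
  · exact Or.inr ⟨h1.symm, apply_zero_nonneg_of_expDual_nonneg hx,
      apply_two_nonpos_of_expDual_nonneg hx h1.symm⟩
  · exact Or.inl ⟨h1, mul_exp_le_of_expDual_nonneg hx h1⟩

end ExpDualNonneg

theorem tendsto_exp_neg_smul_expCurve :
    Tendsto (fun a => exp (-a) • expCurve a) atTop (𝓝 ![1, 0, 0]) := by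
  refine tendsto_pi_nhds.2 fun i => ?_
  fin_cases i
  · simp [expCurve, ← exp_add]
  · simpa [expCurve] using tendsto_exp_neg_atTop_nhds_zero
  · simpa [expCurve, mul_comm] using tendsto_pow_mul_exp_neg_atTop_nhds_zero 1

theorem tendsto_inv_smul_expCurve_neg :
    Tendsto (fun s => s⁻¹ • expCurve (-s)) atTop (𝓝 ![0, 0, -1]) := by
  refine tendsto_pi_nhds.2 fun i => ?_
  fin_cases i
  · simpa [expCurve] using tendsto_inv_atTop_zero.mul tendsto_exp_neg_atTop_nhds_zero
  · simpa [expCurve] using tendsto_inv_atTop_zero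
  · refine tendsto_const_nhds.congr' ((eventually_gt_atTop 0).mono fun s hs => ?_)
    simp [expCurve, hs.ne']

theorem Kexp_subset_closure_conicHull_expCurve :
    Kexp ⊆ closure (conicHull (Set.range expCurve)) := by
  have he₀ : ![1, 0, 0] ∈ closure (conicHull (Set.range expCurve)) :=
    conicHull.mem_closure_of_tendsto (.of_forall fun a => (exp_pos _).le) Set.mem_range_self
      tendsto_exp_neg_smul_expCurve
  have he₂ : ![0, 0, -1] ∈ closure (conicHull (Set.range expCurve)) :=
    conicHull.mem_closure_of_tendsto ((eventually_ge_atTop 0).mono fun s hs => inv_nonneg.2 hs)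
      (fun s => Set.mem_range_self (-s)) tendsto_inv_smul_expCurve_neg
  rintro x (⟨h1, h0⟩ | ⟨h1, h0, h2⟩)
  · have hx : x = x 1 • expCurve (x 2 / x 1) + (x 0 - x 1 * exp (x 2 / x 1)) • ![1, 0, 0] := by
      ext i; fin_cases i <;> simp [expCurve, mul_div_cancel₀ _ h1.ne']
    rw [hx]
    exact conicHull.add_mem_closure
      (subset_closure (conicHull.smul_mem h1.le (subset_conicHull ⟨_, rfl⟩)))
      (conicHull.smul_mem_closure (by linarith) he₀)
  · have hx : x = x 0 • ![1, 0, 0] + (-x 2) • ![0, 0, -1] := by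
      ext i; fin_cases i <;> simp [h1]
    rw [hx]
    exact conicHull.add_mem_closure (conicHull.smul_mem_closure h0 he₀)
      (conicHull.smul_mem_closure (by linarith) he₂)

/-- The closure of the conic hull of the curve `{(exp x, 1, x) : x ∈ ℝ}` is the
exponential cone. -/
theorem closure_conicHull_expCurve_eq_Kexp :
    closure (conicHull (Set.range fun x : ℝ => ![Real.exp x, 1, x])) = Kexp := by
  apply Set.Subset.antisymm
  · intro x hx
    refine mem_Kexp_of_expDual_nonneg fun r => conicHull.closure_subset_dotProduct_nonneg ?_ hx
    rintro _ ⟨a, rfl⟩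
    exact expDual_dotProduct_expCurve_nonneg r a
  · exact Kexp_subset_closure_conicHull_expCurve
end

section
/- The dual cone of the exponential cone K_exp equals the topological closure of the conic hull of the curve {(exp(−x−1), x, −1) : x ∈ ℝ} ⊆ ℝ³. -/
open Real

/-- The dual cone of `C ⊆ ℝ³` with respect to the standard inner product. -/
def dualCone (C : Set (Fin 3 → ℝ)) : Set (Fin 3 → ℝ) :=
  {y | ∀ x ∈ C, 0 ≤ y 0 * x 0 + y 1 * x 1 + y 2 * x 2}

lemma key_analytic (a b c : ℝ)
    (h : ∀ t : ℝ, 0 ≤ a * Real.exp (-t - 1) + b * t + c * (-1)) :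
    (0 < b ∧ b * Real.exp (c / b) ≤ a) ∨ (b = 0 ∧ 0 ≤ a ∧ c ≤ 0) := by
  rcases lt_trichotomy b 0 with hb | hb | hb
  · exfalso
    have hbne : b ≠ 0 := hb.ne
    set t : ℝ := max (-1) ((c - max a 0) / b + 1) with ht
    have ht1 : -1 ≤ t := le_max_left _ _
    have ht2 : (c - max a 0) / b + 1 ≤ t := le_max_right _ _
    have hexp : Real.exp (-t - 1) ≤ 1 := Real.exp_le_one_iff.mpr (by linarith)
    have hexp0 : 0 < Real.exp (-t - 1) := Real.exp_pos _
    have h1 : a * Real.exp (-t - 1) ≤ max a 0 := by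
      rcases le_or_gt 0 a with ha | ha
      · calc a * Real.exp (-t - 1) ≤ a * 1 := by nlinarith
        _ ≤ max a 0 := by simp [le_max_iff]
      · nlinarith [le_max_right a 0]
    have heq : b * ((c - max a 0) / b + 1) = c - max a 0 + b := by field_simp
    have h2 : b * t ≤ c - max a 0 + b := by
      have := mul_le_mul_of_nonpos_left ht2 hb.le
      linarith [this, heq.ge]
    have := h t
    nlinarith
  · -- b = 0
    subst hb
    have hc : c ≤ 0 := by
      by_contra hc
      push_neg at hc
      rcases le_or_gt a 0 with ha | ha
      · have := h 0
        nlinarith [Real.exp_pos (-(0:ℝ) - 1)]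
      · have hh := h (-Real.log (c / a))
        rw [show -(-Real.log (c/a)) - 1 = Real.log (c/a) + (-1) by ring,
          Real.exp_add, Real.exp_log (by positivity)] at hh
        have he : Real.exp (-1 : ℝ) < 1 := Real.exp_lt_one_iff.mpr (by norm_num)
        have hep := Real.exp_pos (-1 : ℝ)
        have hane : a ≠ 0 := ha.ne'
        have hca : a * (c / a * Real.exp (-1:ℝ)) = c * Real.exp (-1:ℝ) := by
          field_simp
        nlinarith
    have ha : 0 ≤ a := by
      by_contra ha
      push_neg at ha
      have hane : a ≠ 0 := ha.ne
      have hca : 0 ≤ c / a := by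
        rw [div_nonneg_iff]; right; exact ⟨hc, ha.le⟩
      have hh := h (-1 - Real.log (c / a + 1))
      rw [show -(-1 - Real.log (c/a+1)) - 1 = Real.log (c/a+1) by ring,
        Real.exp_log (by linarith)] at hh
      have hkey : a * (c / a + 1) = c + a := by field_simp
      nlinarith
    exact Or.inr ⟨rfl, ha, hc⟩
  · -- b > 0
    have hbne : b ≠ 0 := hb.ne'
    have ha : 0 < a := by
      by_contra ha
      push_neg at ha
      have := h ((c - 1) / b)
      have hb' : b * ((c - 1) / b) = c - 1 := by field_simp
      nlinarith [Real.exp_pos (-((c-1)/b) - 1)]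
    have hane : a ≠ 0 := ha.ne'
    have hlog := h (Real.log (a / b) - 1)
    rw [show -(Real.log (a/b) - 1) - 1 = -Real.log (a/b) by ring,
      Real.exp_neg, Real.exp_log (by positivity)] at hlog
    have h1 : a * (a / b)⁻¹ = b := by field_simp
    have h2 : c / b ≤ Real.log (a / b) := by
      rw [h1] at hlog
      rw [div_le_iff₀ hb]
      nlinarith
    have h3 : Real.exp (c / b) ≤ a / b := by
      calc Real.exp (c / b) ≤ Real.exp (Real.log (a / b)) := Real.exp_le_exp.mpr h2
      _ = a / b := Real.exp_log (by positivity)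
    refine Or.inl ⟨hb, ?_⟩
    rw [mul_comm, ← le_div_iff₀ hb]
    exact h3

lemma curve_mem_dual (t : ℝ) : (![Real.exp (-t - 1), t, -1] : Fin 3 → ℝ) ∈ dualCone Kexp := by
  intro x hx
  simp only [Matrix.cons_val_zero, Matrix.cons_val_one, Matrix.head_cons,
    Matrix.cons_val_two, Matrix.tail_cons]
  rcases hx with ⟨h1, h2⟩ | ⟨h1, h2, h3⟩
  · have hne : x 1 ≠ 0 := h1.ne'
    have e1 : x 1 * (x 2 / x 1) = x 2 := by field_simp
    have e2 : Real.exp (-t - 1) * Real.exp (x 2 / x 1) = Real.exp (x 2 / x 1 - t - 1) := by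
      rw [← Real.exp_add]; ring_nf
    have e3 : x 2 / x 1 - t - 1 + 1 ≤ Real.exp (x 2 / x 1 - t - 1) :=
      Real.add_one_le_exp _
    have hep : 0 < Real.exp (-t - 1) := Real.exp_pos _
    nlinarith
  · rw [h1]
    have := Real.exp_pos (-t - 1)
    nlinarith

lemma zero_mem_conicHull (S : Set (Fin 3 → ℝ)) : (0 : Fin 3 → ℝ) ∈ conicHull S :=
  ⟨0, Fin.elim0, Fin.elim0, fun i => i.elim0, fun i => i.elim0, by simp⟩

lemma self_mem_conicHull {S : Set (Fin 3 → ℝ)} {s : Fin 3 → ℝ} (hs : s ∈ S) :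
    s ∈ conicHull S :=
  ⟨1, fun _ => 1, fun _ => s, fun _ => zero_le_one, fun _ => hs, by simp⟩

lemma smul_mem_conicHull {S : Set (Fin 3 → ℝ)} {p : Fin 3 → ℝ} (r : ℝ) (hr : 0 ≤ r)
    (hp : p ∈ conicHull S) : r • p ∈ conicHull S := by
  obtain ⟨n, c, v, hc, hv, rfl⟩ := hp
  exact ⟨n, fun i => r * c i, v, fun i => mul_nonneg hr (hc i), hv,
    by rw [Finset.smul_sum]; simp [smul_smul]⟩

lemma convex_conicHull (S : Set (Fin 3 → ℝ)) : Convex ℝ (conicHull S) := by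
  intro p hp q hq α β hα hβ hαβ
  obtain ⟨n, c, v, hc, hv, rfl⟩ := hp
  obtain ⟨m, d, w, hd, hw, rfl⟩ := hq
  refine ⟨n + m, Fin.append (fun i => α * c i) (fun j => β * d j), Fin.append v w,
    fun i => ?_, fun i => ?_, ?_⟩
  · exact Fin.addCases (fun j => by simpa using mul_nonneg hα (hc j))
      (fun j => by simpa using mul_nonneg hβ (hd j)) i
  · exact Fin.addCases (fun j => by simpa using hv j) (fun j => by simpa using hw j) i
  · rw [Fin.sum_univ_add]
    simp only [Fin.append_left, Fin.append_right]
    rw [Finset.smul_sum, Finset.smul_sum]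
    simp [smul_smul]

lemma isClosed_dualCone (C : Set (Fin 3 → ℝ)) : IsClosed (dualCone C) := by
  have : dualCone C = ⋂ x ∈ C, {y : Fin 3 → ℝ | 0 ≤ y 0 * x 0 + y 1 * x 1 + y 2 * x 2} := by
    ext y; simp [dualCone]
  rw [this]
  refine isClosed_biInter fun x _ => isClosed_le continuous_const ?_
  exact (((continuous_apply 0).mul continuous_const).add
    ((continuous_apply 1).mul continuous_const)).add
    ((continuous_apply 2).mul continuous_const)

lemma conicHull_curve_subset_dual :
    conicHull (Set.range fun x : ℝ => ![Real.exp (-x - 1), x, -1]) ⊆ dualCone Kexp := by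
  rintro p ⟨n, c, v, hc, hv, rfl⟩ x hx
  rw [Finset.sum_apply, Finset.sum_apply, Finset.sum_apply,
    Finset.sum_mul, Finset.sum_mul, Finset.sum_mul,
    ← Finset.sum_add_distrib, ← Finset.sum_add_distrib]
  refine Finset.sum_nonneg fun i _ => ?_
  obtain ⟨t, hvt⟩ := hv i
  have hd := curve_mem_dual t x hx
  rw [← hvt]
  simp only [Pi.smul_apply, smul_eq_mul, Matrix.cons_val_zero, Matrix.cons_val_one,
    Matrix.head_cons, Matrix.cons_val_two, Matrix.tail_cons] at *
  nlinarith [hc i]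

/-- The dual cone of the exponential cone equals the closure of the conic hull of the
curve `{(exp(−x−1), x, −1) : x ∈ ℝ}`. -/
theorem dualCone_Kexp_eq_closure_conicHull :
    dualCone Kexp =
      closure (conicHull (Set.range fun x : ℝ => ![Real.exp (-x - 1), x, -1])) := by
  set S := Set.range fun x : ℝ => ![Real.exp (-x - 1), x, -1] with hS
  refine Set.Subset.antisymm ?_ (closure_minimal conicHull_curve_subset_dual
    (isClosed_dualCone _))
  intro y hy
  by_contra hyc
  obtain ⟨f, u, hfu, huy⟩ := geometric_hahn_banach_closed_point
    (Convex.closure (convex_conicHull S)) isClosed_closure hyc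
  have h0 : (0 : ℝ) < u := by
    have := hfu 0 (subset_closure (zero_mem_conicHull S))
    simpa using this
  have hfle : ∀ p ∈ conicHull S, f p ≤ 0 := by
    intro p hp
    by_contra hfp
    push_neg at hfp
    have hr := hfu (((u + 1) / f p) • p)
      (subset_closure (smul_mem_conicHull _ (by positivity) hp))
    rw [map_smul, smul_eq_mul, div_mul_cancel₀ _ hfp.ne'] at hr
    linarith
  -- representation of f
  set w : Fin 3 → ℝ := fun i => f (Pi.single i 1) with hw
  have hrep : ∀ a : Fin 3 → ℝ, f a = a 0 * w 0 + a 1 * w 1 + a 2 * w 2 := by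
    intro a
    have hd : a = a 0 • (Pi.single 0 1 : Fin 3 → ℝ) + a 1 • (Pi.single 1 1 : Fin 3 → ℝ) + a 2 • (Pi.single 2 1 : Fin 3 → ℝ) := by
      funext j
      fin_cases j <;> simp [Pi.single_apply]
    conv_lhs => rw [hd]
    simp [map_add, map_smul, smul_eq_mul, hw]
  set x : Fin 3 → ℝ := fun i => -(w i) with hx
  have hcurve : ∀ t : ℝ, 0 ≤ x 0 * Real.exp (-t - 1) + x 1 * t + x 2 * (-1) := by
    intro t
    have hm : (![Real.exp (-t - 1), t, -1] : Fin 3 → ℝ) ∈ conicHull S :=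
      self_mem_conicHull ⟨t, rfl⟩
    have := hfle _ hm
    rw [hrep] at this
    simp only [Matrix.cons_val_zero, Matrix.cons_val_one, Matrix.head_cons,
      Matrix.cons_val_two, Matrix.tail_cons] at this
    simp only [hx]
    nlinarith
  have hxK : x ∈ Kexp := by
    rcases key_analytic (x 0) (x 1) (x 2) hcurve with h | h
    · exact Or.inl h
    · exact Or.inr h
  have hdual := hy x hxK
  have hfy : f y = y 0 * w 0 + y 1 * w 1 + y 2 * w 2 := hrep y
  have hx0 : x 0 = -(w 0) := rfl
  have hx1 : x 1 = -(w 1) := rfl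
  have hx2 : x 2 = -(w 2) := rfl
  rw [hx0, hx1, hx2] at hdual
  linarith [hfy ▸ huy]
end
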